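/- The relative mean squared error of the MMSE estimator β̂_M = (h-4)/T satisfies MSE(β̂_M)/β² = 2/(h-2), where T has gamma density with shape h/2 and rate β/2 and h > 4. -/

import Mathlib

/-!
Expanding the square, the MSE is `(h-4)² E[T⁻²] - 2β(h-4) E[T⁻¹] + β²`. The negative moments of
the gamma law come from the Gamma integral `∫ t^(a-1) e^(-rt) dt = Γ(a) / r^a`, so that
`E[T^p] = Γ(h/2 + p) / (Γ(h/2) (β/2)^p)`, and `Γ(s) = (s-1) Γ(s-1)` turns this into
`E[T⁻¹] = β/(h-2)` and `E[T⁻²] = β²/((h-2)(h-4))`. Hence the MSE is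
`β² ((h-4)/(h-2) - 2(h-4)/(h-2) + 1) = 2β²/(h-2)`.
-/

open MeasureTheory Real Set

noncomputable def gammaDensity (h β t : ℝ) : ℝ :=
  (1 / Real.Gamma (h / 2)) * (β / 2) ^ (h / 2) * Real.exp (-β * t / 2) * t ^ (h / 2 - 1)

theorem Real.Gamma_eq_sub_one_mul_Gamma_sub_one {s : ℝ} (hs : 1 < s) :
    Gamma s = (s - 1) * Gamma (s - 1) := by
  rw [← Gamma_add_one (by linarith), sub_add_cancel]

theorem Real.inv_sq_eq_rpow_neg_two (t : ℝ) : t⁻¹ ^ 2 = t ^ (-2 : ℝ) := by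
  rw [rpow_neg_ofNat, zpow_neg, zpow_ofNat, inv_pow]

theorem integrableOn_rpow_mul_exp_neg_mul {s r : ℝ} (hs : -1 < s) (hr : 0 < r) :
    IntegrableOn (fun t : ℝ ↦ t ^ s * exp (-(r * t))) (Ioi 0) := by
  simpa only [rpow_one, neg_mul] using integrableOn_rpow_mul_exp_neg_mul_rpow hs one_pos hr

theorem rpow_mul_gammaDensity {t : ℝ} (ht : 0 < t) (h β p : ℝ) :
    t ^ p * gammaDensity h β t =
      (β / 2) ^ (h / 2) / Gamma (h / 2) * (t ^ (h / 2 + p - 1) * exp (-(β / 2 * t))) := by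
  rw [gammaDensity, show h / 2 + p - 1 = p + (h / 2 - 1) by ring, rpow_add ht]
  ring_nf

theorem integrableOn_rpow_mul_gammaDensity {h β p : ℝ} (hp : 0 < h / 2 + p) (hβ : 0 < β) :
    IntegrableOn (fun t ↦ t ^ p * gammaDensity h β t) (Ioi 0) :=
  IntegrableOn.congr_fun ((integrableOn_rpow_mul_exp_neg_mul (s := h / 2 + p - 1)
    (by linarith) (by positivity : 0 < β / 2)).const_mul _)
    (fun _ ht ↦ (rpow_mul_gammaDensity ht h β p).symm) measurableSet_Ioi

theorem integral_rpow_mul_gammaDensity {h β p : ℝ} (hp : 0 < h / 2 + p) (hβ : 0 < β) :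
    ∫ t in Ioi 0, t ^ p * gammaDensity h β t =
      Gamma (h / 2 + p) / (Gamma (h / 2) * (β / 2) ^ p) := by
  have hb : 0 < β / 2 := by positivity
  rw [setIntegral_congr_fun measurableSet_Ioi (fun t ht ↦ rpow_mul_gammaDensity ht h β p),
    integral_const_mul, integral_rpow_mul_exp_neg_mul_Ioi hp hb, div_rpow zero_le_one hb.le,
    one_rpow, rpow_add hb]
  field_simp

theorem integral_gammaDensity {h β : ℝ} (hh : 0 < h) (hβ : 0 < β) :
    ∫ t in Ioi 0, gammaDensity h β t = 1 := by
  have hmoment := integral_rpow_mul_gammaDensity (p := 0) (by positivity) hβ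
  simp only [rpow_zero, one_mul, add_zero, mul_one] at hmoment
  rw [hmoment, div_self (Gamma_pos_of_pos (by positivity)).ne']

theorem integral_inv_mul_gammaDensity {h β : ℝ} (hh : 2 < h) (hβ : 0 < β) :
    ∫ t in Ioi 0, t⁻¹ * gammaDensity h β t = β / (h - 2) := by
  simp_rw [← rpow_neg_one]
  rw [integral_rpow_mul_gammaDensity (by linarith) hβ, ← sub_eq_add_neg,
    Gamma_eq_sub_one_mul_Gamma_sub_one (by linarith : 1 < h / 2), rpow_neg_one]
  have hG : Gamma (h / 2 - 1) ≠ 0 := (Gamma_pos_of_pos (by linarith)).ne'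
  have : h - 2 ≠ 0 := by linarith
  -- `field_simp` would rewrite the argument of `Gamma` and lose track of `hG`
  generalize Gamma (h / 2 - 1) = G at hG ⊢
  field_simp

theorem integral_inv_sq_mul_gammaDensity {h β : ℝ} (hh : 4 < h) (hβ : 0 < β) :
    ∫ t in Ioi 0, t⁻¹ ^ 2 * gammaDensity h β t = β ^ 2 / ((h - 2) * (h - 4)) := by
  simp_rw [inv_sq_eq_rpow_neg_two]
  rw [integral_rpow_mul_gammaDensity (by linarith) hβ, ← sub_eq_add_neg,
    Gamma_eq_sub_one_mul_Gamma_sub_one (by linarith : 1 < h / 2),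
    Gamma_eq_sub_one_mul_Gamma_sub_one (by linarith : 1 < h / 2 - 1), sub_sub, one_add_one_eq_two,
    rpow_neg (by positivity), rpow_two]
  have hG : Gamma (h / 2 - 2) ≠ 0 := (Gamma_pos_of_pos (by linarith)).ne'
  have : h / 2 - 1 ≠ 0 := by linarith
  have : h / 2 - 2 ≠ 0 := by linarith
  generalize Gamma (h / 2 - 2) = G at hG ⊢
  field_simp
  ring

/-- The relative MSE of the MMSE estimator β̂_M = (h-4)/T:
E[((h-4)/T - β)²]/β² = 2/(h-2), for T gamma with shape h/2 and rate β/2, h > 4. -/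
theorem rmse_mmse (h β : ℝ) (hh : 4 < h) (hβ : 0 < β) :
    (∫ t in Ioi (0 : ℝ), ((h - 4) / t - β) ^ 2 * gammaDensity h β t) / β ^ 2 =
      2 / (h - 2) := by
  have hi2 : IntegrableOn (fun t ↦ t⁻¹ ^ 2 * gammaDensity h β t) (Ioi 0) := by
    simpa only [inv_sq_eq_rpow_neg_two] using
      integrableOn_rpow_mul_gammaDensity (p := -2) (by linarith) hβ
  have hi1 : IntegrableOn (fun t ↦ t⁻¹ * gammaDensity h β t) (Ioi 0) := by
    simpa only [rpow_neg_one] using integrableOn_rpow_mul_gammaDensity (p := -1) (by linarith) hβ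
  have hi0 : IntegrableOn (gammaDensity h β) (Ioi 0) := by
    simpa only [rpow_zero, one_mul] using
      integrableOn_rpow_mul_gammaDensity (p := 0) (by linarith) hβ
  have expand (t : ℝ) : ((h - 4) / t - β) ^ 2 * gammaDensity h β t =
      (h - 4) ^ 2 * (t⁻¹ ^ 2 * gammaDensity h β t) - 2 * β * (h - 4) * (t⁻¹ * gammaDensity h β t)
        + β ^ 2 * gammaDensity h β t := by
    ring
  simp_rw [expand]
  rw [integral_add ((hi2.const_mul _).sub' (hi1.const_mul _)) (hi0.const_mul _),
    integral_sub (hi2.const_mul _) (hi1.const_mul _), integral_const_mul, integral_const_mul,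
    integral_const_mul, integral_inv_sq_mul_gammaDensity hh hβ,
    integral_inv_mul_gammaDensity (by linarith) hβ, integral_gammaDensity (by linarith) hβ]
  have : h - 2 ≠ 0 := by linarith
  have : h - 4 ≠ 0 := by linarith
  field_simp
  ring
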